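/- arXiv:math/0701262 — 5 statements merged into one kernel-verified Lean document; each statement's English description precedes it below -/
import Mathlib

section
/- Let f(x) = Σ aₙxⁿ and g(x) = Σ bₙxⁿ be real power series converging on (-R,R) with bₙ > 0 for all n. If the sequence {aₙ/bₙ} is increasing, then the function h(x) = f(x)/g(x) is increasing on (0,R). -/
open scoped ENNReal NNReal

/-!
For `0 < x ≤ y` the cross difference `f y * g x - f x * g y` is the double series
`∑_{m,n} a_m b_n (y^m x^n - x^m y^n)`. Symmetrizing in `(m, n)` turns its terms into
`(a_m b_n - a_n b_m) (y^m x^n - x^m y^n)`, and both factors are `≤ 0` for `m ≤ n` (the first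
because `a_n / b_n` increases, the second because `y / x ≥ 1`), so the difference is `≥ 0`,
i.e. `f x / g x ≤ f y / g y`.
-/

theorem pow_mul_pow_le_pow_mul_pow {R : Type*} [CommSemiring R] [PartialOrder R]
    [IsOrderedRing R] {x y : R} (hx : 0 ≤ x) (hxy : x ≤ y) {m n : ℕ} (hmn : m ≤ n) :
    y ^ m * x ^ n ≤ x ^ m * y ^ n := by
  obtain ⟨k, rfl⟩ := Nat.exists_eq_add_of_le hmn
  have hy : 0 ≤ y := hx.trans hxy
  calc y ^ m * x ^ (m + k) = x ^ m * y ^ m * x ^ k := by ring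
    _ ≤ x ^ m * y ^ m * y ^ k := by gcongr
    _ = x ^ m * y ^ (m + k) := by ring

theorem mul_sub_mul_nonneg_of_monotone_div {K : Type*} [Field K] [LinearOrder K]
    [IsStrictOrderedRing K] {a b : ℕ → K} (hb : ∀ n, 0 < b n)
    (hmono : Monotone fun n => a n / b n) {x y : K} (hx : 0 ≤ x) (hxy : x ≤ y) (m n : ℕ) :
    0 ≤ (a m * b n - a n * b m) * (y ^ m * x ^ n - x ^ m * y ^ n) := by
  have cross_le : ∀ {i j : ℕ}, i ≤ j → a i * b j ≤ a j * b i := fun hij =>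
    (div_le_div_iff₀ (hb _) (hb _)).1 (hmono hij)
  rcases le_total m n with hmn | hnm
  · exact mul_nonneg_of_nonpos_of_nonpos (sub_nonpos.2 (cross_le hmn))
      (sub_nonpos.2 (pow_mul_pow_le_pow_mul_pow hx hxy hmn))
  · refine mul_nonneg (sub_nonneg.2 ?_) (sub_nonneg.2 ?_)
    · simpa only [mul_comm] using cross_le hnm
    · simpa only [mul_comm] using pow_mul_pow_le_pow_mul_pow hx hxy hnm

theorem HasSum.nonneg_of_add_swap_nonneg {α E : Type*} [AddCommGroup E] [LinearOrder E]
    [IsOrderedAddMonoid E] [TopologicalSpace E] [IsTopologicalAddGroup E]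
    [OrderClosedTopology E] {F : α × α → E} {s : E} (hF : HasSum F s)
    (h : ∀ p, 0 ≤ F p + F p.swap) : 0 ≤ s := by
  have hswap : HasSum (fun p : α × α => F p.swap) s := (Equiv.prodComm α α).hasSum_iff.2 hF
  have hs : 0 ≤ s + s := (hF.add hswap).nonneg h
  by_contra! hneg
  exact (add_neg hneg hneg).not_ge hs

theorem HasSum.mul_of_real {ι κ : Type*} {u : ι → ℝ} {v : κ → ℝ} {s t : ℝ}
    (hu : HasSum u s) (hv : HasSum v t) :
    HasSum (fun p : ι × κ => u p.1 * v p.2) (s * t) :=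
  hu.mul hv (summable_mul_of_summable_norm hu.summable.norm hv.summable.norm)

theorem pos_of_hasSum_mul_pow {b : ℕ → ℝ} (hb0 : 0 < b 0) (hb : ∀ n, 0 ≤ b n) {x s : ℝ}
    (hx : 0 ≤ x) (hs : HasSum (fun n => b n * x ^ n) s) : 0 < s :=
  hasSum_lt (f := 0) (i := 0) (fun n => mul_nonneg (hb n) (pow_nonneg hx n)) (by simpa using hb0) hasSum_zero hs

theorem mul_le_mul_of_hasSum_of_monotone_div {a b : ℕ → ℝ} (hb : ∀ n, 0 < b n)
    (hmono : Monotone fun n => a n / b n) {x y fx fy gx gy : ℝ} (hx : 0 ≤ x) (hxy : x ≤ y)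
    (hfx : HasSum (fun n => a n * x ^ n) fx) (hfy : HasSum (fun n => a n * y ^ n) fy)
    (hgx : HasSum (fun n => b n * x ^ n) gx) (hgy : HasSum (fun n => b n * y ^ n) gy) :
    fx * gy ≤ fy * gx := by
  have hdiff := (hfy.mul_of_real hgx).sub (hfx.mul_of_real hgy)
  refine sub_nonneg.1 (hdiff.nonneg_of_add_swap_nonneg fun p => ?_)
  refine (mul_sub_mul_nonneg_of_monotone_div hb hmono hx hxy p.1 p.2).trans_eq ?_
  simp only [Prod.fst_swap, Prod.snd_swap]
  ring

theorem stmt0_general (R : ℝ≥0∞) (a b : ℕ → ℝ) (f g : ℝ → ℝ)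
    (hf : ∀ x : ℝ, (‖x‖₊ : ℝ≥0∞) < R → HasSum (fun n => a n * x ^ n) (f x))
    (hg : ∀ x : ℝ, (‖x‖₊ : ℝ≥0∞) < R → HasSum (fun n => b n * x ^ n) (g x))
    (hb : ∀ n, 0 < b n)
    (hmono : Monotone fun n => a n / b n) :
    MonotoneOn (fun x => f x / g x) {x : ℝ | 0 < x ∧ (‖x‖₊ : ℝ≥0∞) < R} := by
  rintro x ⟨hx, hxR⟩ y ⟨hy, hyR⟩ hxy
  have g_pos : ∀ {z : ℝ}, 0 < z → (‖z‖₊ : ℝ≥0∞) < R → 0 < g z := fun hz hzR =>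
    pos_of_hasSum_mul_pow (hb 0) (fun n => (hb n).le) hz.le (hg _ hzR)
  rw [div_le_div_iff₀ (g_pos hx hxR) (g_pos hy hyR)]
  exact mul_le_mul_of_hasSum_of_monotone_div hb hmono hx.le hxy
    (hf x hxR) (hf y hyR) (hg x hxR) (hg y hyR)

/-- If `f = Σ aₙ xⁿ` and `g = Σ bₙ xⁿ` converge on `(-R, R)` (with
`0 < R ≤ ∞`), `bₙ > 0` for all `n`, and `aₙ/bₙ` is increasing, then `f/g` is
increasing on `(0, R)`. -/
theorem stmt0 (R : ℝ≥0∞) (hR : 0 < R) (a b : ℕ → ℝ) (f g : ℝ → ℝ)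
    (hf : ∀ x : ℝ, (‖x‖₊ : ℝ≥0∞) < R → HasSum (fun n => a n * x ^ n) (f x))
    (hg : ∀ x : ℝ, (‖x‖₊ : ℝ≥0∞) < R → HasSum (fun n => b n * x ^ n) (g x))
    (hb : ∀ n, 0 < b n)
    (hmono : Monotone fun n => a n / b n) :
    MonotoneOn (fun x => f x / g x) {x : ℝ | 0 < x ∧ (‖x‖₊ : ℝ≥0∞) < R} :=
  stmt0_general R a b f g hf hg hb hmono
end

section
/- Let f : I → (0,∞) be differentiable on an open subinterval I of (0,∞). Then f is GG-convex (i.e., f(√(xy)) ≤ √(f(x)f(y)) for all x,y ∈ I) if and only if x f'(x)/f(x) is increasing on I. -/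
/-!
Under the substitution `x = exp t`, GG-convexity of `f` on `I` is midpoint convexity of
`g = log ∘ f ∘ exp` on `exp ⁻¹' I`, and `x f'(x) / f(x)` at `x = exp t` is `g'(t)`. For a
differentiable function on an interval, midpoint convexity is equivalent to monotonicity of the
derivative: a monotone derivative gives convexity, and conversely midpoint convexity already
squeezes every chord slope between the derivatives at its endpoints.
-/

open Real Set Filter Topology

def MidpointConvexOn (s : Set ℝ) (g : ℝ → ℝ) : Prop :=
  ∀ x ∈ s, ∀ y ∈ s, g ((x + y) / 2) ≤ (g x + g y) / 2

namespace MidpointConvexOn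

variable {s : Set ℝ} {g : ℝ → ℝ} {a b G : ℝ}

theorem comp_neg (h : MidpointConvexOn s g) : MidpointConvexOn (-s) (fun x => g (-x)) := by
  intro x hx y hy
  have := h (-x) hx (-y) hy
  rwa [← neg_add, neg_div] at this

theorem slope_midpoint_le (h : MidpointConvexOn s g) (ha : a ∈ s) (hb : b ∈ s) (hab : a < b) :
    slope g a ((a + b) / 2) ≤ slope g a b := by
  have hmid := h a ha b hb
  rw [slope_def_field, slope_def_field, div_le_div_iff₀ (by linarith) (by linarith)]
  nlinarith

/-- The slopes from `a` to `a + (b - a) / 2 ^ n` decrease with `n` and tend to `G`. -/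
theorem hasDerivAt_le_slope (h : MidpointConvexOn s g) (hs : Convex ℝ s) (ha : a ∈ s)
    (hb : b ∈ s) (hab : a < b) (hg : HasDerivAt g G a) : G ≤ slope g a b := by
  set c : ℕ → ℝ := fun n => a + (b - a) * (1 / 2) ^ n with hc
  have hc_gt (n : ℕ) : a < c n := by
    have : 0 < (b - a) * (1 / 2 : ℝ) ^ n := by have := sub_pos.2 hab; positivity
    simp only [hc]; linarith
  have hc_mem (n : ℕ) : c n ∈ s := by
    refine hs.ordConnected.out ha hb ⟨(hc_gt n).le, ?_⟩
    have : (1 / 2 : ℝ) ^ n ≤ 1 := pow_le_one₀ (by norm_num) (by norm_num)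
    simp only [hc]; nlinarith
  have hc_succ (n : ℕ) : c (n + 1) = (a + c n) / 2 := by simp only [hc]; ring
  have hanti : Antitone fun n => slope g a (c n) := antitone_nat_of_succ_le fun n => by
    simpa only [hc_succ] using h.slope_midpoint_le ha (hc_mem n) (hc_gt n)
  have hc_lim : Tendsto c atTop (𝓝[≠] a) := by
    refine tendsto_nhdsWithin_of_tendsto_nhds_of_eventually_within c ?_
      (Eventually.of_forall fun n => (hc_gt n).ne')
    have := ((tendsto_pow_atTop_nhds_zero_of_lt_one (by norm_num : (0 : ℝ) ≤ 1 / 2)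
      (by norm_num)).const_mul (b - a)).const_add a
    rwa [mul_zero, add_zero] at this
  have hlim := (hasDerivAt_iff_tendsto_slope.mp hg).comp hc_lim
  simpa [hc] using le_of_tendsto hlim (Eventually.of_forall fun n => hanti (Nat.zero_le n))

theorem slope_le_hasDerivAt (h : MidpointConvexOn s g) (hs : Convex ℝ s) (ha : a ∈ s)
    (hb : b ∈ s) (hab : a < b) (hg : HasDerivAt g G b) : slope g a b ≤ G := by
  have hg' : HasDerivAt (fun x => g (-x)) (-G) (-b) := by
    have := (neg_neg b ▸ hg).comp (-b) (hasDerivAt_neg (-b))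
    rwa [mul_neg_one] at this
  have := h.comp_neg.hasDerivAt_le_slope hs.neg (by simpa using hb) (by simpa using ha)
    (neg_lt_neg hab) hg'
  rw [slope_def_field, neg_neg, neg_neg] at this
  rw [slope_def_field]
  linarith [show (g a - g b) / (-a - -b) = -((g b - g a) / (b - a)) by ring]

theorem monotoneOn_of_hasDerivAt {g' : ℝ → ℝ} (h : MidpointConvexOn s g) (hs : Convex ℝ s)
    (hg : ∀ x ∈ s, HasDerivAt g (g' x) x) : MonotoneOn g' s := by
  intro a ha b hb hab
  rcases hab.eq_or_lt with rfl | hab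
  · exact le_rfl
  exact (h.hasDerivAt_le_slope hs ha hb hab (hg a ha)).trans
    (h.slope_le_hasDerivAt hs ha hb hab (hg b hb))

end MidpointConvexOn

theorem ConvexOn.midpointConvexOn {s : Set ℝ} {g : ℝ → ℝ} (h : ConvexOn ℝ s g) :
    MidpointConvexOn s g := by
  intro x hx y hy
  have := h.2 hx hy (by norm_num : (0 : ℝ) ≤ 1 / 2) (by norm_num : (0 : ℝ) ≤ 1 / 2) (by norm_num)
  rw [smul_eq_mul, smul_eq_mul, smul_eq_mul, smul_eq_mul,
    show 1 / 2 * x + 1 / 2 * y = (x + y) / 2 by ring] at this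
  linarith

theorem midpointConvexOn_iff_monotoneOn_of_hasDerivAt {s : Set ℝ} {g g' : ℝ → ℝ}
    (hs : Convex ℝ s) (hg : ∀ x ∈ s, HasDerivAt g (g' x) x) :
    MidpointConvexOn s g ↔ MonotoneOn g' s := by
  refine ⟨fun h => h.monotoneOn_of_hasDerivAt hs hg, fun hmono => ?_⟩
  have hderiv : ∀ x ∈ interior s, deriv g x = g' x := fun x hx => (hg x (interior_subset hx)).deriv
  refine (MonotoneOn.convexOn_of_deriv hs (fun x hx => (hg x hx).continuousAt.continuousWithinAt)
    (fun x hx => (hg x (interior_subset hx)).differentiableAt.differentiableWithinAt)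
    ?_).midpointConvexOn
  intro x hx y hy hxy
  rw [hderiv x hx, hderiv y hy]
  exact hmono (interior_subset hx) (interior_subset hy) hxy

theorem Convex.add_div_two_mem {s : Set ℝ} (hs : Convex ℝ s) {x y : ℝ} (hx : x ∈ s) (hy : y ∈ s) :
    (x + y) / 2 ∈ s := by
  have := hs.midpoint_mem hx hy
  rwa [midpoint_eq_smul_add, smul_eq_mul, invOf_eq_inv, inv_mul_eq_div] at this

theorem Real.sqrt_exp_mul_exp (s t : ℝ) : √(exp s * exp t) = exp ((s + t) / 2) := by
  rw [← exp_add, exp_half]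

theorem Real.le_sqrt_mul_iff_log_le {u v w : ℝ} (hu : 0 < u) (hv : 0 < v) (hw : 0 < w) :
    w ≤ √(u * v) ↔ log w ≤ (log u + log v) / 2 := by
  rw [← log_le_log_iff hw (by positivity), log_sqrt (by positivity), log_mul hu.ne' hv.ne']

theorem Convex.exp_preimage {I : Set ℝ} (hI : Convex ℝ I) : Convex ℝ (exp ⁻¹' I) :=
  (hI.ordConnected.preimage_mono exp_monotone).convex

theorem geomConvex_iff_midpointConvexOn_log_comp_exp {I : Set ℝ} {f : ℝ → ℝ} (hI : Convex ℝ I)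
    (hIpos : I ⊆ Ioi 0) (hpos : ∀ x ∈ I, 0 < f x) :
    (∀ x ∈ I, ∀ y ∈ I, f (√(x * y)) ≤ √(f x * f y)) ↔
      MidpointConvexOn (exp ⁻¹' I) (fun t => log (f (exp t))) := by
  have key : ∀ s ∈ exp ⁻¹' I, ∀ t ∈ exp ⁻¹' I,
      f (√(exp s * exp t)) ≤ √(f (exp s) * f (exp t)) ↔
        log (f (exp ((s + t) / 2))) ≤ (log (f (exp s)) + log (f (exp t))) / 2 := by
    intro s hs t ht
    rw [sqrt_exp_mul_exp]
    exact le_sqrt_mul_iff_log_le (hpos _ hs) (hpos _ ht)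
      (hpos _ ((Convex.exp_preimage hI).add_div_two_mem hs ht))
  have hlog : ∀ x ∈ I, log x ∈ exp ⁻¹' I := fun x hx => by
    rwa [mem_preimage, exp_log (hIpos hx)]
  refine ⟨fun hGG s hs t ht => (key s hs t ht).1 (hGG _ hs _ ht), fun hmid x hx y hy => ?_⟩
  have := (key _ (hlog x hx) _ (hlog y hy)).2 (hmid _ (hlog x hx) _ (hlog y hy))
  rwa [exp_log (hIpos hx), exp_log (hIpos hy)] at this

theorem monotoneOn_comp_exp_iff {I : Set ℝ} {φ : ℝ → ℝ} (hIpos : I ⊆ Ioi 0) :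
    MonotoneOn (φ ∘ exp) (exp ⁻¹' I) ↔ MonotoneOn φ I := by
  refine ⟨fun h x hx y hy hxy => ?_, fun h s hs t ht hst => h hs ht (exp_le_exp.2 hst)⟩
  have hlog : ∀ z ∈ I, log z ∈ exp ⁻¹' I := fun z hz => by
    rwa [mem_preimage, exp_log (hIpos hz)]
  have := h (hlog x hx) (hlog y hy) (log_le_log (hIpos hx) hxy)
  rwa [Function.comp_apply, Function.comp_apply, exp_log (hIpos hx), exp_log (hIpos hy)] at this

theorem hasDerivAt_log_comp_exp {f : ℝ → ℝ} {f'x t : ℝ} (hf : HasDerivAt f f'x (exp t))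
    (hft : f (exp t) ≠ 0) :
    HasDerivAt (fun t => log (f (exp t))) (exp t * f'x / f (exp t)) t :=
  ((hf.comp t (hasDerivAt_exp t)).log hft).congr_deriv (by rw [Function.comp_apply]; ring)

theorem stmt5_general (I : Set ℝ) (hIconv : Convex ℝ I)
    (hIsub : I ⊆ Set.Ioi 0) (f f' : ℝ → ℝ)
    (hderiv : ∀ x ∈ I, HasDerivAt f (f' x) x) (hpos : ∀ x ∈ I, 0 < f x) :
    (∀ x ∈ I, ∀ y ∈ I, f (Real.sqrt (x * y)) ≤ Real.sqrt (f x * f y)) ↔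
      MonotoneOn (fun x => x * f' x / f x) I := by
  rw [geomConvex_iff_midpointConvexOn_log_comp_exp hIconv hIsub hpos,
    ← monotoneOn_comp_exp_iff hIsub]
  exact midpointConvexOn_iff_monotoneOn_of_hasDerivAt (Convex.exp_preimage hIconv)
    fun t ht => hasDerivAt_log_comp_exp (hderiv _ ht) (hpos _ ht).ne'

/-- A differentiable positive function on an open subinterval `I` of
`(0,∞)` is GG-convex iff `x f'(x)/f(x)` is increasing on `I`. -/
theorem stmt5 (I : Set ℝ) (hIopen : IsOpen I) (hIconv : Convex ℝ I)
    (hIsub : I ⊆ Set.Ioi 0) (f f' : ℝ → ℝ)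
    (hderiv : ∀ x ∈ I, HasDerivAt f (f' x) x) (hpos : ∀ x ∈ I, 0 < f x) :
    (∀ x ∈ I, ∀ y ∈ I, f (Real.sqrt (x * y)) ≤ Real.sqrt (f x * f y)) ↔
      MonotoneOn (fun x => x * f' x / f x) I :=
  stmt5_general I hIconv hIsub f f' hderiv hpos
end

section
/- Let f(x) = Σ aₙxⁿ with all aₙ > 0, convergent on (-R,R), 0 < R < ∞. If {n aₙ Rⁿ} is increasing and {n! aₙ Rⁿ/(1/2)ₙ} is decreasing (where (1/2)ₙ is the Pochhammer symbol), then 1/f is concave on (0,R); in particular f((x+y)/2) ≤ 2f(x)f(y)/(f(x)+f(y)) for all x,y ∈ (0,R), with equality iff x = y. -/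
/-!
Concavity of `1 / f` on `(0, R)` amounts to `f f'' - 2 f'² > 0` there. Symmetrising the Cauchy
product, the coefficient of `x ^ (m - 2)` in `f f'' - 2 f'²` is half of
`∑_{k + l = m} (m (m - 1) - 6 k l) a_k a_l`, so it suffices that these sums are nonnegative for
`m ≥ 2` and positive for `m = 3`. With `b_k = a_k R ^ k` the hypotheses read
`k b_k ≤ (k + 1) b_{k + 1} ≤ (k + 1/2) b_k`. Summation by parts against the partial sums
`(k + 1) (m - k) (m - 1 - 2 k)` of the weights, which change sign under `k ↦ m - 1 - k`, folds the
sum onto `k < m / 2`. There the ratio bounds leave the weights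
`(m - 1 - 2 k) (m - 3 k - 2) / (m - 1 - k)` against the decreasing sequence `(m - k) b_k b_{m - k}`;
these weights change sign once, and their total is nonnegative by Cauchy–Schwarz, so a second
summation by parts concludes. Strict concavity of `1 / f` then gives the strict midpoint
inequality.
-/

/-- The rising factorial (Pochhammer symbol) `(a)ₙ = a(a+1)⋯(a+n−1)`. -/
def ascFac (a : ℝ) : ℕ → ℝ
  | 0 => 1
  | n + 1 => ascFac a n * (a + n)

open Finset

theorem ascFac_pos {a : ℝ} (ha : 0 < a) : ∀ n, 0 < ascFac a n
  | 0 => one_pos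
  | n + 1 => mul_pos (ascFac_pos ha n) (by positivity)

theorem succ_mul_le_of_antitone_factorial_div_ascFac {a : ℝ} (ha : 0 < a) {b : ℕ → ℝ}
    (h : Antitone fun n : ℕ => (n.factorial : ℝ) * b n / ascFac a n) (k : ℕ) :
    ((k : ℝ) + 1) * b (k + 1) ≤ (k + a) * b k := by
  have hk := h k.le_succ
  have hA := ascFac_pos ha k
  simp only [ascFac, Nat.factorial_succ, Nat.cast_mul] at hk
  rw [div_le_div_iff₀ (by positivity) hA] at hk
  refine le_of_mul_le_mul_left ?_ (by positivity : (0 : ℝ) < k.factorial * ascFac a k)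
  push_cast at hk
  linarith

theorem sum_range_nonneg_of_sign_change {c : ℕ → ℝ} {n s j : ℕ} (hpos : ∀ i < s, 0 ≤ c i)
    (hneg : ∀ i, s ≤ i → i < n → c i ≤ 0) (htot : 0 ≤ ∑ i ∈ range n, c i) (hj : j ≤ n) :
    0 ≤ ∑ i ∈ range j, c i := by
  by_cases hjs : j ≤ s
  · exact sum_nonneg fun i hi => hpos i ((mem_range.1 hi).trans_le hjs)
  · have htail : ∑ i ∈ Ico j n, c i ≤ 0 :=
      sum_nonpos fun i hi => hneg i (by have := (mem_Ico.1 hi).1; omega) (mem_Ico.1 hi).2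
    rw [← sum_range_add_sum_Ico _ hj] at htot
    linarith

theorem sum_range_mul_nonneg_of_antitone {c δ : ℕ → ℝ} {n : ℕ}
    (hc : ∀ j ≤ n, 0 ≤ ∑ i ∈ range j, c i) (hδ : ∀ i, i + 1 < n → δ (i + 1) ≤ δ i)
    (hδn : 0 ≤ δ (n - 1)) : 0 ≤ ∑ i ∈ range n, c i * δ i := by
  simp_rw [mul_comm (c _), ← smul_eq_mul (δ _)]
  rw [sum_range_by_parts, sub_nonneg]
  refine (sum_nonpos fun i hi => ?_).trans (smul_nonneg hδn (hc n le_rfl))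
  have hi := mem_range.1 hi
  exact smul_nonpos_of_nonpos_of_nonneg (sub_nonpos.2 (hδ i (by omega))) (hc _ (by omega))

theorem sum_range_eq_two_nsmul_sum_range_half {M : Type*} [AddCommMonoid M] {G : ℕ → M} {m : ℕ}
    (hsym : ∀ k < m, G (m - 1 - k) = G k) (hmid : Odd m → G (m / 2) = 0) :
    ∑ k ∈ range m, G k = 2 • ∑ k ∈ range (m / 2), G k := by
  obtain ⟨N, rfl | rfl⟩ := Nat.even_or_odd' m
  · have hupper : ∑ j ∈ range N, G (N + j) = ∑ j ∈ range N, G j := by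
      rw [← sum_range_reflect]
      refine sum_congr rfl fun j hj => ?_
      have := mem_range.1 hj
      rw [← hsym j (by omega)]
      congr 1
      omega
    rw [Nat.mul_div_cancel_left _ two_pos, two_mul, sum_range_add, hupper, two_nsmul]
  · have hN : (2 * N + 1) / 2 = N := by omega
    have hupper : ∑ j ∈ range N, G (N + (j + 1)) = ∑ j ∈ range N, G j := by
      rw [← sum_range_reflect]
      refine sum_congr rfl fun j hj => ?_
      have := mem_range.1 hj
      rw [← hsym j (by omega)]
      congr 1
      omega
    rw [hN, show 2 * N + 1 = N + (N + 1) by ring, sum_range_add, sum_range_succ', hupper,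
      add_zero, ← hN, hmid (odd_two_mul_add_one N), hN, add_zero, two_nsmul]

noncomputable def reducedWeight (m i : ℕ) : ℝ := (m - 1 - 2 * i) * (m - 3 * i - 2) / (m - 1 - i)

theorem two_mul_sum_range_sub (μ : ℝ) (N : ℕ) :
    2 * ∑ i ∈ range N, (μ - 1 - i) = N * (2 * μ - 1 - N) := by
  induction N with
  | zero => simp
  | succ N ih => rw [sum_range_succ, mul_add, ih]; push_cast; ring

theorem sum_range_reducedWeight_nonneg {m : ℕ} (hm : 2 ≤ m) :
    0 ≤ ∑ i ∈ range (m / 2), reducedWeight m i := by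
  set N := m / 2
  have hN : (1 : ℝ) ≤ N := by exact_mod_cast (show 1 ≤ N by omega)
  have hmN : (2 * N : ℝ) ≤ m := by exact_mod_cast (show 2 * N ≤ m by omega)
  have hmN' : (3 * N + 1 : ℝ) ≤ 2 * m := by exact_mod_cast (show 3 * N + 1 ≤ 2 * m by omega)
  have ht : ∀ i ∈ range N, (1 : ℝ) ≤ m - 1 - i := fun i hi => by
    have : (i + 1 : ℝ) ≤ N := by exact_mod_cast mem_range.1 hi
    linarith
  set A := ∑ i ∈ range N, ((m : ℝ) - 1 - i)
  set H := ∑ i ∈ range N, 1 / ((m : ℝ) - 1 - i)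
  have hA : 2 * A = N * (2 * m - 1 - N) := two_mul_sum_range_sub _ _
  have hApos : 0 < A := by nlinarith
  have hsplit : ∑ i ∈ range N, reducedWeight m i =
      6 * A - (7 * m - 5) * N + (m - 1) * (2 * m - 1) * H := by
    have hterm : ∀ i ∈ range N, reducedWeight m i =
        6 * ((m : ℝ) - 1 - i) - (7 * m - 5) + (m - 1) * (2 * m - 1) * (1 / ((m : ℝ) - 1 - i)) :=
      fun i hi => by
        have : (m : ℝ) - 1 - i ≠ 0 := by linarith [ht i hi]
        rw [reducedWeight]
        field_simp
        ring
    rw [sum_congr rfl hterm, sum_add_distrib, sum_sub_distrib, ← mul_sum, ← mul_sum, sum_const,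
      card_range, nsmul_eq_mul]
    ring
  have hAH : (N : ℝ) ^ 2 ≤ A * H := by
    have := sq_sum_div_le_sum_sq_div (range N) (fun _ => (1 : ℝ)) (g := fun i => (m : ℝ) - 1 - i)
      fun i hi => by linarith [ht i hi]
    simp only [sum_const, card_range, nsmul_eq_mul, mul_one, one_pow] at this
    rwa [div_le_iff₀ hApos, mul_comm] at this
  rw [hsplit]
  refine nonneg_of_mul_nonneg_right ?_ hApos
  -- as `A * H ≥ N ^ 2`, `A` times the sum is at least this product
  have hfac : 0 ≤ (2 * A - (m - 1) * N) * (3 * A - (2 * m - 1) * N) := by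
    apply mul_nonneg <;> nlinarith
  have hcoef : 0 ≤ ((m : ℝ) - 1) * (2 * m - 1) := by nlinarith
  nlinarith [mul_nonneg hcoef (sub_nonneg.2 hAH)]

theorem sum_range_reducedWeight_nonneg_of_le {m j : ℕ} (hm : 2 ≤ m) (hj : j ≤ m / 2) :
    0 ≤ ∑ i ∈ range j, reducedWeight m i := by
  have hfac : ∀ i < m / 2, 0 ≤ (m : ℝ) - 1 - 2 * i ∧ 0 < (m : ℝ) - 1 - i := fun i hi => by
    have : (2 * i + 2 : ℝ) ≤ m := by exact_mod_cast (show 2 * i + 2 ≤ m by omega)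
    constructor <;> linarith
  refine sum_range_nonneg_of_sign_change (s := (m + 1) / 3) (fun i hi => ?_)
    (fun i hsi hin => ?_) (sum_range_reducedWeight_nonneg hm) hj
  · obtain ⟨h1, h2⟩ := hfac i (by omega)
    have : (3 * i + 2 : ℝ) ≤ m := by exact_mod_cast (show 3 * i + 2 ≤ m by omega)
    exact div_nonneg (mul_nonneg h1 (by linarith)) h2.le
  · obtain ⟨h1, h2⟩ := hfac i hin
    have : (m : ℝ) ≤ 3 * i + 2 := by exact_mod_cast (show m ≤ 3 * i + 2 by omega)
    exact div_nonpos_of_nonpos_of_nonneg (mul_nonpos_of_nonneg_of_nonpos h1 (by linarith)) h2.le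

def curvWeight (m k : ℕ) : ℝ := m * (m - 1) - 6 * k * (m - k)

/-- `curvCoeff c m / 2` is the coefficient of `x ^ (m - 2)` in `f * f'' - 2 * f' ^ 2` for
`f x = ∑ c n * x ^ n`. -/
def curvCoeff (c : ℕ → ℝ) (m : ℕ) : ℝ :=
  ∑ p ∈ antidiagonal m, curvWeight m p.1 * (c p.1 * c p.2)

theorem sum_range_succ_curvWeight (m k : ℕ) :
    ∑ i ∈ range (k + 1), curvWeight m i = (k + 1) * (m - k) * (m - 1 - 2 * k) := by
  induction k with
  | zero => simp [curvWeight]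
  | succ k ih => rw [sum_range_succ, ih, curvWeight]; push_cast; ring

theorem sum_range_curvWeight_mul_eq (p : ℕ → ℝ) (m : ℕ) :
    ∑ k ∈ range (m + 1), curvWeight m k * p k =
      ∑ k ∈ range m, (k + 1) * (m - k) * (m - 1 - 2 * k) * (p k - p (k + 1)) := by
  simp_rw [mul_comm (curvWeight m _), ← smul_eq_mul (p _)]
  rw [sum_range_by_parts, add_tsub_cancel_right]
  simp only [sum_range_succ_curvWeight, smul_eq_mul, sub_self, mul_zero, zero_mul, zero_sub,
    ← sum_neg_distrib]
  exact sum_congr rfl fun k _ => by ring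

theorem sum_range_curvWeight_mul_eq_two_mul {p : ℕ → ℝ} {m : ℕ}
    (hp : ∀ k ≤ m, p (m - k) = p k) :
    ∑ k ∈ range (m + 1), curvWeight m k * p k =
      2 * ∑ k ∈ range (m / 2), (k + 1) * (m - k) * (m - 1 - 2 * k) * (p k - p (k + 1)) := by
  rw [sum_range_curvWeight_mul_eq, sum_range_eq_two_nsmul_sum_range_half, two_nsmul, two_mul]
  · intro k hk
    rw [show m - 1 - k + 1 = m - k by omega, hp k hk.le, show m - 1 - k = m - (k + 1) by omega,
      hp (k + 1) hk, Nat.cast_sub hk]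
    push_cast
    ring
  · rintro ⟨N, rfl⟩
    rw [show (2 * N + 1) / 2 = N by omega]
    push_cast
    ring

theorem mul_mul_le_of_ratio_bounds {b : ℕ → ℝ} (hb : ∀ n, 0 ≤ b n)
    (h1 : ∀ k : ℕ, (k : ℝ) * b k ≤ (k + 1) * b (k + 1))
    (h2 : ∀ k : ℕ, ((k : ℝ) + 1) * b (k + 1) ≤ (k + 1 / 2) * b k) {m k : ℕ} (hk : k + 1 ≤ m) :
    ((k : ℝ) + 1) * (m - k - 1) * (b (k + 1) * b (m - (k + 1))) ≤
      (k + 1 / 2) * (m - k) * (b k * b (m - k)) := by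
  have hleft := h1 (m - (k + 1))
  rw [show m - (k + 1) + 1 = m - k by omega, Nat.cast_sub hk] at hleft
  push_cast at hleft
  have hmk : (0 : ℝ) ≤ m - k - 1 := by
    have : (k : ℝ) + 1 ≤ m := by exact_mod_cast hk
    linarith
  calc _ = (((k : ℝ) + 1) * b (k + 1)) * ((m - k - 1) * b (m - (k + 1))) := by ring
    _ ≤ ((k + 1 / 2) * b k) * ((m - k) * b (m - k)) :=
        mul_le_mul (h2 k) (by linarith) (mul_nonneg hmk (hb _)) (mul_nonneg (by positivity) (hb k))
    _ = _ := by ring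

theorem reducedWeight_mul_le {b : ℕ → ℝ} (hb : ∀ n, 0 ≤ b n)
    (h1 : ∀ k : ℕ, (k : ℝ) * b k ≤ (k + 1) * b (k + 1))
    (h2 : ∀ k : ℕ, ((k : ℝ) + 1) * b (k + 1) ≤ (k + 1 / 2) * b k) {m k : ℕ}
    (hk : 2 * k + 2 ≤ m) :
    reducedWeight m k * ((m - k) * (b k * b (m - k))) / 2 ≤
      (k + 1) * (m - k) * (m - 1 - 2 * k) * (b k * b (m - k) - b (k + 1) * b (m - (k + 1))) := by
  have hk' : (2 * k + 2 : ℝ) ≤ m := by exact_mod_cast hk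
  have hne : (m : ℝ) - 1 - k ≠ 0 := by linarith
  rw [← sub_nonneg]
  have hid : (k + 1) * (m - k) * (m - 1 - 2 * k) * (b k * b (m - k) - b (k + 1) * b (m - (k + 1))) -
        reducedWeight m k * ((m - k) * (b k * b (m - k))) / 2 =
      (m - k) * (m - 1 - 2 * k) / (m - 1 - k) * ((k + 1 / 2) * (m - k) * (b k * b (m - k)) -
        (k + 1) * (m - k - 1) * (b (k + 1) * b (m - (k + 1)))) := by
    rw [reducedWeight]
    field_simp
    ring
  rw [hid]
  exact mul_nonneg (div_nonneg (mul_nonneg (by linarith) (by linarith)) (by linarith))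
    (sub_nonneg.2 (mul_mul_le_of_ratio_bounds hb h1 h2 (by omega)))

theorem sum_range_reducedWeight_mul_nonneg {b : ℕ → ℝ} (hb : ∀ n, 0 ≤ b n)
    (h1 : ∀ k : ℕ, (k : ℝ) * b k ≤ (k + 1) * b (k + 1))
    (h2 : ∀ k : ℕ, ((k : ℝ) + 1) * b (k + 1) ≤ (k + 1 / 2) * b k) {m : ℕ} (hm : 2 ≤ m) :
    0 ≤ ∑ k ∈ range (m / 2), reducedWeight m k * ((m - k) * (b k * b (m - k))) := by
  refine sum_range_mul_nonneg_of_antitone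
    (fun j hj => sum_range_reducedWeight_nonneg_of_le hm hj) (fun i hi => ?_) ?_
  · have hi' : ((i : ℝ) + 1) * ((m - (i + 1 : ℕ)) * (b (i + 1) * b (m - (i + 1)))) ≤
        ((i : ℝ) + 1) * ((m - i) * (b i * b (m - i))) := by
      have := mul_mul_le_of_ratio_bounds hb h1 h2 (m := m) (k := i) (by omega)
      have : 0 ≤ ((m : ℝ) - i) * (b i * b (m - i)) := mul_nonneg
        (sub_nonneg.2 (by exact_mod_cast (show i ≤ m by omega))) (mul_nonneg (hb _) (hb _))
      push_cast
      nlinarith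
    exact le_of_mul_le_mul_left hi' (by positivity)
  · exact mul_nonneg (sub_nonneg.2 (by exact_mod_cast (show m / 2 - 1 ≤ m by omega)))
      (mul_nonneg (hb _) (hb _))

theorem curvCoeff_nonneg {b : ℕ → ℝ} (hb : ∀ n, 0 ≤ b n)
    (h1 : ∀ k : ℕ, (k : ℝ) * b k ≤ (k + 1) * b (k + 1))
    (h2 : ∀ k : ℕ, ((k : ℝ) + 1) * b (k + 1) ≤ (k + 1 / 2) * b k) {m : ℕ} (hm : 2 ≤ m) :
    0 ≤ curvCoeff b m := by
  rw [curvCoeff, Nat.sum_antidiagonal_eq_sum_range_succ (fun i j => curvWeight m i * (b i * b j)),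
    sum_range_curvWeight_mul_eq_two_mul (p := fun k => b k * b (m - k))
      fun k hk => by simp only [Nat.sub_sub_self hk, mul_comm]]
  have := sum_le_sum (s := range (m / 2)) fun k hk =>
    reducedWeight_mul_le hb h1 h2 (m := m) (k := k) (by have := mem_range.1 hk; omega)
  rw [← sum_div] at this
  linarith [sum_range_reducedWeight_mul_nonneg hb h1 h2 hm]

theorem curvCoeff_three (b : ℕ → ℝ) : curvCoeff b 3 = 12 * (b 0 * b 3 - b 1 * b 2) := by
  simp [curvCoeff, curvWeight, Nat.sum_antidiagonal_eq_sum_range_succ_mk, sum_range_succ]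
  ring

theorem curvCoeff_three_pos {b : ℕ → ℝ} (hb : ∀ n, 0 < b n)
    (h1 : ∀ k : ℕ, (k : ℝ) * b k ≤ (k + 1) * b (k + 1))
    (h2 : ∀ k : ℕ, ((k : ℝ) + 1) * b (k + 1) ≤ (k + 1 / 2) * b k) : 0 < curvCoeff b 3 := by
  rw [curvCoeff_three]
  have hb1 : b 1 ≤ b 0 / 2 := by have := h2 0; norm_num at this; linarith
  have hb2 : b 2 ≤ 3 / 2 * b 3 := by have := h1 2; norm_num at this; linarith
  have : b 1 * b 2 ≤ b 0 / 2 * (3 / 2 * b 3) :=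
    mul_le_mul hb1 hb2 (hb 2).le (by linarith [hb 0])
  nlinarith [mul_pos (hb 0) (hb 3)]

theorem curvCoeff_mul_pow (c : ℕ → ℝ) (R : ℝ) (m : ℕ) :
    curvCoeff (fun n => c n * R ^ n) m = curvCoeff c m * R ^ m := by
  rw [curvCoeff, curvCoeff, sum_mul]
  refine sum_congr rfl fun p hp => ?_
  rw [← mem_antidiagonal.1 hp, pow_add]
  ring

def derivCoeff (c : ℕ → ℝ) (n : ℕ) : ℝ := (n + 1) * c (n + 1)

theorem sum_antidiagonal_mul_derivCoeff (c : ℕ → ℝ) (n : ℕ) :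
    ∑ p ∈ antidiagonal n, (c p.1 * derivCoeff (derivCoeff c) p.2 -
      2 * (derivCoeff c p.1 * derivCoeff c p.2)) = curvCoeff c (n + 2) / 2 := by
  have h₁ : ∑ p ∈ antidiagonal n, c p.1 * derivCoeff (derivCoeff c) p.2 =
      ∑ p ∈ antidiagonal (n + 2), (p.2 : ℝ) * (p.2 - 1) * (c p.1 * c p.2) := by
    rw [Nat.sum_antidiagonal_succ', Nat.sum_antidiagonal_succ']
    norm_num
    exact sum_congr rfl fun p _ => by simp only [derivCoeff]; push_cast; ring
  have h₂ : ∑ p ∈ antidiagonal n, derivCoeff c p.1 * derivCoeff c p.2 =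
      ∑ p ∈ antidiagonal (n + 2), (p.1 : ℝ) * p.2 * (c p.1 * c p.2) := by
    rw [Nat.sum_antidiagonal_succ, Nat.sum_antidiagonal_succ']
    norm_num
    exact sum_congr rfl fun p _ => by simp only [derivCoeff]; ring
  have hswap : ∑ p ∈ antidiagonal (n + 2), (p.1 : ℝ) * (p.1 - 1) * (c p.1 * c p.2) =
      ∑ p ∈ antidiagonal (n + 2), (p.2 : ℝ) * (p.2 - 1) * (c p.1 * c p.2) := by
    rw [← Nat.sum_antidiagonal_swap]
    exact sum_congr rfl fun p _ => by simp only [Prod.fst_swap, Prod.snd_swap]; ring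
  have hcurv : curvCoeff c (n + 2) =
      ∑ p ∈ antidiagonal (n + 2), (p.1 : ℝ) * (p.1 - 1) * (c p.1 * c p.2) +
        ∑ p ∈ antidiagonal (n + 2), (p.2 : ℝ) * (p.2 - 1) * (c p.1 * c p.2) -
          4 * ∑ p ∈ antidiagonal (n + 2), (p.1 : ℝ) * p.2 * (c p.1 * c p.2) := by
    rw [mul_sum, ← sum_add_distrib, ← sum_sub_distrib]
    refine sum_congr rfl fun p hp => ?_
    rw [curvWeight, ← mem_antidiagonal.1 hp]
    push_cast
    ring
  rw [sum_sub_distrib, ← mul_sum, h₁, h₂, hcurv, hswap]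
  ring

section PowerSeries

variable {c : ℕ → ℝ} {r y R : ℝ}

theorem exists_norm_mul_pow_le (hr : Summable fun n => c n * r ^ n) :
    ∃ C, ∀ n, ‖c n * r ^ n‖ ≤ C := by
  obtain ⟨C, hC⟩ := hr.tendsto_atTop_zero.norm.bddAbove_range
  exact ⟨C, fun n => hC ⟨n, rfl⟩⟩

theorem summable_norm_mul_pow_of_abs_lt (hr : Summable fun n => c n * r ^ n) (hy : |y| < |r|) :
    Summable fun n => ‖c n * y ^ n‖ := by
  obtain ⟨C, hC⟩ := exists_norm_mul_pow_le hr
  have hr0 : 0 < |r| := (abs_nonneg y).trans_lt hy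
  have hq : |y| / |r| < 1 := (div_lt_one hr0).2 hy
  refine (summable_geometric_of_lt_one (by positivity) hq).mul_left C |>.of_nonneg_of_le
    (fun _ => norm_nonneg _) fun n => ?_
  calc ‖c n * y ^ n‖ = ‖c n * r ^ n‖ * (|y| / |r|) ^ n := by
        simp only [norm_mul, norm_pow, Real.norm_eq_abs, div_pow]
        field_simp
    _ ≤ C * (|y| / |r|) ^ n := by gcongr; exact hC n

theorem summable_norm_derivCoeff_mul_pow_of_abs_lt (hr : Summable fun n => c n * r ^ n)
    (hy : |y| < |r|) : Summable fun n => ‖derivCoeff c n * y ^ n‖ := by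
  obtain ⟨C, hC⟩ := exists_norm_mul_pow_le hr
  have hr0 : 0 < |r| := (abs_nonneg y).trans_lt hy
  set q := |y| / |r|
  have hq : ‖q‖ < 1 := by
    rw [Real.norm_of_nonneg (by positivity)]; exact (div_lt_one hr0).2 hy
  have hgeom : Summable fun n : ℕ => ((n : ℝ) + 1) * q ^ n := by
    simpa [add_mul] using (summable_pow_mul_geometric_of_norm_lt_one 1 hq).add
      (summable_geometric_of_norm_lt_one hq)
  refine (hgeom.mul_left (C / |r|)).of_nonneg_of_le (fun _ => norm_nonneg _) fun n => ?_
  calc ‖derivCoeff c n * y ^ n‖ = ((n : ℝ) + 1) * ‖c (n + 1) * r ^ (n + 1)‖ * q ^ n / |r| := by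
        simp only [derivCoeff, norm_mul, norm_pow, Real.norm_eq_abs, q, div_pow, pow_succ,
          abs_of_nonneg (by positivity : (0 : ℝ) ≤ n + 1)]
        field_simp
    _ ≤ ((n : ℝ) + 1) * C * q ^ n / |r| := by gcongr; exact hC _
    _ = C / |r| * (((n : ℝ) + 1) * q ^ n) := by ring

theorem exists_abs_lt_abs_lt (hy : |y| < R) : ∃ r, |y| < |r| ∧ |r| < R := by
  obtain ⟨r, hyr, hrR⟩ := exists_between hy
  have : |r| = r := abs_of_pos ((abs_nonneg y).trans_lt hyr)
  exact ⟨r, by rwa [this], by rwa [this]⟩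

theorem summable_norm_mul_pow (hc : ∀ z, |z| < R → Summable fun n => c n * z ^ n)
    (hy : |y| < R) : Summable fun n => ‖c n * y ^ n‖ := by
  obtain ⟨r, hyr, hrR⟩ := exists_abs_lt_abs_lt hy
  exact summable_norm_mul_pow_of_abs_lt (hc r hrR) hyr

theorem summable_norm_derivCoeff_mul_pow (hc : ∀ z, |z| < R → Summable fun n => c n * z ^ n)
    (hy : |y| < R) : Summable fun n => ‖derivCoeff c n * y ^ n‖ := by
  obtain ⟨r, hyr, hrR⟩ := exists_abs_lt_abs_lt hy
  exact summable_norm_derivCoeff_mul_pow_of_abs_lt (hc r hrR) hyr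

theorem hasDerivAt_tsum_mul_pow (hc : ∀ z, |z| < R → Summable fun n => c n * z ^ n)
    (hy : |y| < R) :
    HasDerivAt (fun z => ∑' n, c n * z ^ n) (∑' n, derivCoeff c n * y ^ n) y := by
  obtain ⟨r, hyr, hrR⟩ := exists_between hy
  have hr0 : 0 < r := (abs_nonneg y).trans_lt hyr
  have hu : Summable fun n : ℕ => n * ‖c n‖ * r ^ (n - 1) := by
    rw [← summable_nat_add_iff 1]
    refine (summable_norm_derivCoeff_mul_pow hc (y := r) (by rwa [abs_of_pos hr0])).congr
      fun n => ?_
    rw [derivCoeff, norm_mul, norm_mul, norm_pow, Real.norm_eq_abs, Real.norm_eq_abs,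
      Real.norm_eq_abs, abs_of_pos hr0, abs_of_nonneg (by positivity : (0 : ℝ) ≤ n + 1)]
    push_cast
    ring
  have hderiv := hasDerivAt_tsum_of_isPreconnected hu isOpen_Ioo (convex_Ioo (-r) r).isPreconnected
    (g := fun n z => c n * z ^ n) (g' := fun n z => c n * (n * z ^ (n - 1)))
    (fun n z _ => (hasDerivAt_pow n z).const_mul (c n)) (fun n z hz => ?_)
    (Set.mem_Ioo.2 ⟨neg_neg_of_pos hr0, hr0⟩) (hc 0 (by simpa using (abs_nonneg y).trans_lt hy))
    (abs_lt.1 hyr)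
  · have hshift : ∀ n : ℕ, derivCoeff c n * y ^ n = c (n + 1) * ((n + 1 : ℕ) * y ^ (n + 1 - 1)) :=
      fun n => by rw [derivCoeff, add_tsub_cancel_right]; push_cast; ring
    rwa [tsum_eq_zero_add' ((summable_norm_derivCoeff_mul_pow hc hy).of_norm.congr hshift),
      Nat.cast_zero, zero_mul, mul_zero, zero_add, ← tsum_congr hshift] at hderiv
  · have hz' : |z| ≤ r := abs_le.2 ⟨hz.1.le, hz.2.le⟩
    calc ‖c n * (n * z ^ (n - 1))‖ = n * ‖c n‖ * |z| ^ (n - 1) := by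
          simp only [norm_mul, norm_pow, Real.norm_eq_abs, Nat.abs_cast]
          ring
      _ ≤ n * ‖c n‖ * r ^ (n - 1) := by gcongr

theorem summable_derivCoeff_mul_pow (hc : ∀ z, |z| < R → Summable fun n => c n * z ^ n) :
    ∀ z, |z| < R → Summable fun n => derivCoeff c n * z ^ n :=
  fun _ hz => (summable_norm_derivCoeff_mul_pow hc hz).of_norm

theorem hasSum_mul_pow_antidiagonal {u v : ℕ → ℝ} (hu : Summable fun n => ‖u n * y ^ n‖)
    (hv : Summable fun n => ‖v n * y ^ n‖) :
    HasSum (fun n => (∑ p ∈ antidiagonal n, u p.1 * v p.2) * y ^ n)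
      ((∑' n, u n * y ^ n) * ∑' n, v n * y ^ n) := by
  have hterm : (fun n => (∑ p ∈ antidiagonal n, u p.1 * v p.2) * y ^ n) =
      fun n => ∑ p ∈ antidiagonal n, u p.1 * y ^ p.1 * (v p.2 * y ^ p.2) := by
    funext n
    rw [sum_mul]
    refine sum_congr rfl fun p hp => ?_
    rw [← mem_antidiagonal.1 hp, pow_add]
    ring
  rw [tsum_mul_tsum_eq_tsum_sum_antidiagonal_of_summable_norm hu hv, hterm]
  exact (summable_norm_sum_mul_antidiagonal_of_summable_norm hu hv).of_norm.hasSum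

theorem hasSum_curvCoeff (hc : ∀ z, |z| < R → Summable fun n => c n * z ^ n) (hy : |y| < R) :
    HasSum (fun n => curvCoeff c (n + 2) / 2 * y ^ n)
      ((∑' n, c n * y ^ n) * (∑' n, derivCoeff (derivCoeff c) n * y ^ n) -
        2 * (∑' n, derivCoeff c n * y ^ n) ^ 2) := by
  have h₁ := hasSum_mul_pow_antidiagonal (summable_norm_mul_pow hc hy)
    (summable_norm_derivCoeff_mul_pow (summable_derivCoeff_mul_pow hc) hy)
  have h₂ := hasSum_mul_pow_antidiagonal (summable_norm_derivCoeff_mul_pow hc hy)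
    (summable_norm_derivCoeff_mul_pow hc hy)
  have hterm : (fun n => curvCoeff c (n + 2) / 2 * y ^ n) = fun n =>
      (∑ p ∈ antidiagonal n, c p.1 * derivCoeff (derivCoeff c) p.2) * y ^ n -
        2 * ((∑ p ∈ antidiagonal n, derivCoeff c p.1 * derivCoeff c p.2) * y ^ n) := by
    funext n
    rw [← sum_antidiagonal_mul_derivCoeff, sum_sub_distrib, ← mul_sum]
    ring
  rw [hterm, sq]
  exact h₁.sub (h₂.mul_left 2)

end PowerSeries

theorem strictConcaveOn_one_div {s : Set ℝ} (hs : IsOpen s) (hconv : Convex ℝ s)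
    {F F' F'' : ℝ → ℝ} (hF : ∀ x ∈ s, HasDerivAt F (F' x) x)
    (hF' : ∀ x ∈ s, HasDerivAt F' (F'' x) x) (hpos : ∀ x ∈ s, 0 < F x)
    (h : ∀ x ∈ s, 2 * F' x ^ 2 < F x * F'' x) : StrictConcaveOn ℝ s fun x => 1 / F x := by
  have hd : ∀ x ∈ s, HasDerivAt (fun x => 1 / F x) (-F' x / F x ^ 2) x := fun x hx => by
    simp only [one_div]
    exact (hF x hx).inv (hpos x hx).ne'
  refine strictConcaveOn_of_deriv2_neg hconv
    (fun x hx => (hd x hx).continuousAt.continuousWithinAt) fun x hx => ?_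
  rw [hs.interior_eq] at hx
  have hFx := hpos x hx
  have hdd := (hF' x hx).neg.div ((hF x hx).pow 2) (pow_ne_zero 2 hFx.ne')
  have heq : deriv (fun x => 1 / F x) =ᶠ[nhds x] fun x => -F' x / F x ^ 2 := by
    filter_upwards [hs.mem_nhds hx] with z hz using (hd z hz).deriv
  rw [Function.iterate_succ_apply', Function.iterate_one, heq.deriv_eq,
    show (fun x => -F' x / F x ^ 2) = -F' / F ^ 2 from rfl, hdd.deriv]
  simp only [Pi.pow_apply, Pi.neg_apply]
  refine div_neg_of_neg_of_pos ?_ (by positivity)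
  push_cast
  nlinarith [mul_pos hFx (sub_pos.2 (h x hx))]

theorem StrictConcaveOn.le_harmonic_mean_of_one_div {s : Set ℝ} {F : ℝ → ℝ}
    (hF : StrictConcaveOn ℝ s fun x => 1 / F x) (hpos : ∀ x ∈ s, 0 < F x) {x y : ℝ}
    (hx : x ∈ s) (hy : y ∈ s) :
    F ((x + y) / 2) ≤ 2 * F x * F y / (F x + F y) ∧
      (F ((x + y) / 2) = 2 * F x * F y / (F x + F y) ↔ x = y) := by
  have hFx := hpos x hx
  have hFy := hpos y hy
  by_cases hxy : x = y
  · subst hxy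
    have : 2 * F x * F x / (F x + F x) = F x := by field_simp; ring
    simp [this]
  have hmid : (1 / 2 : ℝ) • x + (1 / 2 : ℝ) • y = (x + y) / 2 := by
    simp only [smul_eq_mul]; ring
  have hhalf : (0 : ℝ) < 1 / 2 := by norm_num
  have hlt := hF.2 hx hy hxy hhalf hhalf (by norm_num)
  have hmpos := hpos _ (hmid ▸ hF.1 hx hy hhalf.le hhalf.le (by norm_num))
  rw [hmid] at hlt
  simp only [smul_eq_mul] at hlt
  have : F ((x + y) / 2) < 2 * F x * F y / (F x + F y) := by
    have hhm : 2 * F x * F y / (F x + F y) = 1 / (1 / 2 * (1 / F x) + 1 / 2 * (1 / F y)) := by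
      field_simp
      ring
    rw [hhm, lt_one_div hmpos (by positivity)]
    exact hlt
  exact ⟨this.le, iff_of_false this.ne hxy⟩

theorem strictConcaveOn_one_div_of_hasSum {c : ℕ → ℝ} {f : ℝ → ℝ} {R : ℝ}
    (hf : ∀ x ∈ Set.Ioo (-R) R, HasSum (fun n => c n * x ^ n) (f x))
    (hcurv : ∀ m, 2 ≤ m → 0 ≤ curvCoeff c m) (hcurv3 : 0 < curvCoeff c 3)
    (hpos : ∀ x ∈ Set.Ioo 0 R, 0 < f x) :
    StrictConcaveOn ℝ (Set.Ioo 0 R) fun x => 1 / f x := by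
  have hc : ∀ z, |z| < R → Summable fun n => c n * z ^ n :=
    fun z hz => (hf z (abs_lt.1 hz)).summable
  have habs : ∀ x ∈ Set.Ioo 0 R, |x| < R := fun x hx => by rw [abs_of_pos hx.1]; exact hx.2
  have hball : ∀ x ∈ Set.Ioo 0 R, x ∈ Set.Ioo (-R) R := fun x hx => abs_lt.1 (habs x hx)
  refine strictConcaveOn_one_div isOpen_Ioo (convex_Ioo 0 R) (fun x hx => ?_)
    (fun x hx => hasDerivAt_tsum_mul_pow (summable_derivCoeff_mul_pow hc) (habs x hx)) hpos
    fun x hx => ?_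
  · refine (hasDerivAt_tsum_mul_pow hc (habs x hx)).congr_of_eventuallyEq ?_
    filter_upwards [isOpen_Ioo.mem_nhds (hball x hx)] with z hz using (hf z hz).tsum_eq.symm
  · rw [← (hf x (hball x hx)).tsum_eq, ← sub_pos]
    refine hasSum_lt (f := 0) (i := 1) (fun n => ?_) ?_ hasSum_zero
      (hasSum_curvCoeff hc (habs x hx))
    · exact mul_nonneg (div_nonneg (hcurv (n + 2) (by omega)) two_pos.le) (pow_nonneg hx.1.le n)
    · simpa using mul_pos (half_pos hcurv3) hx.1

/-- If `f = Σ aₙ xⁿ` with `aₙ > 0` converges on `(-R,R)`,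
`n aₙ Rⁿ` is increasing and `n! aₙ Rⁿ/(1/2)ₙ` is decreasing, then `1/f` is
concave on `(0,R)`; in particular `f((x+y)/2) ≤ 2f(x)f(y)/(f(x)+f(y))`,
with equality iff `x = y`. -/
theorem stmt9 (R : ℝ) (hR : 0 < R) (a : ℕ → ℝ) (ha : ∀ n, 0 < a n) (f : ℝ → ℝ)
    (hf : ∀ x ∈ Set.Ioo (-R) R, HasSum (fun n => a n * x ^ n) (f x))
    (hmono : Monotone fun n : ℕ => (n : ℝ) * a n * R ^ n)
    (hanti : Antitone fun n : ℕ => (n.factorial : ℝ) * a n * R ^ n / ascFac (1/2) n) :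
    ConcaveOn ℝ (Set.Ioo 0 R) (fun x => 1 / f x) ∧
      ∀ x ∈ Set.Ioo 0 R, ∀ y ∈ Set.Ioo 0 R,
        f ((x + y) / 2) ≤ 2 * f x * f y / (f x + f y) ∧
          (f ((x + y) / 2) = 2 * f x * f y / (f x + f y) ↔ x = y) := by
  set b : ℕ → ℝ := fun n => a n * R ^ n
  have hb : ∀ n, 0 < b n := fun n => mul_pos (ha n) (pow_pos hR n)
  have h1 : ∀ k : ℕ, (k : ℝ) * b k ≤ (k + 1) * b (k + 1) := fun k => by
    simpa only [b, Nat.cast_succ, mul_assoc] using hmono k.le_succ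
  have h2 : ∀ k : ℕ, ((k : ℝ) + 1) * b (k + 1) ≤ (k + 1 / 2) * b k :=
    succ_mul_le_of_antitone_factorial_div_ascFac one_half_pos
      (by simpa only [b, mul_assoc] using hanti)
  have hcurv : ∀ m, 2 ≤ m → 0 ≤ curvCoeff a m := fun m hm => by
    have := curvCoeff_nonneg (fun n => (hb n).le) h1 h2 hm
    rw [curvCoeff_mul_pow] at this
    exact nonneg_of_mul_nonneg_left this (pow_pos hR m)
  have hcurv3 : 0 < curvCoeff a 3 := by
    have := curvCoeff_three_pos hb h1 h2
    rw [curvCoeff_mul_pow] at this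
    exact pos_of_mul_pos_left this (pow_pos hR 3).le
  have hpos : ∀ x ∈ Set.Ioo 0 R, 0 < f x := fun x hx =>
    hasSum_lt (f := 0) (i := 0) (fun n => mul_nonneg (ha n).le (pow_nonneg hx.1.le n))
      (by simpa using ha 0) hasSum_zero (hf x ⟨by linarith [hx.1], hx.2⟩)
  have hconc := strictConcaveOn_one_div_of_hasSum hf hcurv hcurv3 hpos
  exact ⟨hconc.concaveOn, fun x hx y hy => hconc.le_harmonic_mean_of_one_div hpos hx hy⟩
end

section
/- For all x, y ∈ (0,∞): cosh(√(xy)) ≤ √(cosh x · cosh y) ≤ cosh(√((x²+y²)/2)) ≤ (cosh x + cosh y)/2, with equality in each inequality iff x = y. -/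
/-!
All three inequalities come from the strict convexity of `u ↦ cosh √u` on `[0, ∞)`, whose
derivative `sinh √u / (2√u)` increases because `sinh` is convex with `sinh 0 = 0`.
Midpoint convexity at `x²` and `y²` is the third inequality. Writing
`cosh x cosh y = (cosh (x + y) + cosh (x - y)) / 2` and `cosh² m = (cosh 2m + 1) / 2`, the second
is superadditivity of the same function at `(x + y)²` and `(x - y)²`, and the first only needs
`2√(xy) ≤ x + y` and `cosh (x - y) > 1`.
-/

open Real Set

theorem StrictConvexOn.map_add_map_lt_map_add_add_map_zero {𝕜 : Type*} [Field 𝕜] [LinearOrder 𝕜]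
    [IsStrictOrderedRing 𝕜] {f : 𝕜 → 𝕜} (hf : StrictConvexOn 𝕜 (Ici 0) f) {a b : 𝕜}
    (ha : 0 < a) (hb : 0 < b) : f a + f b < f (a + b) + f 0 := by
  have hab : 0 < a + b := add_pos ha hb
  have slope_lt : ∀ c, 0 < c → c < a + b → (f c - f 0) * (a + b) < (f (a + b) - f 0) * c := by
    intro c hc hcab
    have := hf.secant_strict_mono self_mem_Ici hc.le hab.le hc.ne' hab.ne' hcab
    rwa [sub_zero, sub_zero, div_lt_div_iff₀ hc hab] at this
  have h₁ := slope_lt a ha (by linarith)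
  have h₂ := slope_lt b hb (by linarith)
  have : (f a + f b) * (a + b) < (f (a + b) + f 0) * (a + b) := by linarith
  exact lt_of_mul_lt_mul_right this hab.le

namespace Real

theorem cosh_sq_eq_cosh_two_mul (x : ℝ) : cosh x ^ 2 = (cosh (2 * x) + 1) / 2 := by
  rw [cosh_two_mul, cosh_sq]; ring

theorem cosh_mul_cosh (x y : ℝ) : cosh x * cosh y = (cosh (x + y) + cosh (x - y)) / 2 := by
  rw [cosh_add, cosh_sub]; ring

theorem cosh_sqrt_sq (x : ℝ) : cosh √(x ^ 2) = cosh x := by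
  rw [sqrt_sq_eq_abs, cosh_abs]

theorem strictConvexOn_sinh : StrictConvexOn ℝ (Ici 0) sinh := by
  refine StrictMonoOn.strictConvexOn_of_deriv (convex_Ici 0) continuous_sinh.continuousOn ?_
  rw [deriv_sinh, interior_Ici]
  exact cosh_strictMonoOn.mono Ioi_subset_Ici_self

theorem strictMonoOn_sinh_div : StrictMonoOn (fun t ↦ sinh t / t) (Ioi 0) := by
  intro s (hs : 0 < s) t (ht : 0 < t) hst
  simpa using strictConvexOn_sinh.secant_strict_mono self_mem_Ici hs.le ht.le hs.ne' ht.ne' hst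

theorem hasDerivAt_cosh_sqrt {u : ℝ} (hu : u ≠ 0) :
    HasDerivAt (fun u ↦ cosh √u) (sinh √u / 2 / √u) u := by
  convert (hasDerivAt_sqrt hu).cosh using 1
  field_simp

theorem strictConvexOn_cosh_sqrt : StrictConvexOn ℝ (Ici 0) (fun u ↦ cosh √u) := by
  refine StrictMonoOn.strictConvexOn_of_deriv (convex_Ici 0) (by fun_prop) ?_
  rw [interior_Ici]
  intro u hu v hv huv
  rw [(hasDerivAt_cosh_sqrt (ne_of_gt hu)).deriv, (hasDerivAt_cosh_sqrt (ne_of_gt hv)).deriv,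
    div_right_comm, div_right_comm (sinh √v)]
  exact div_lt_div_of_pos_right (strictMonoOn_sinh_div (sqrt_pos.2 hu) (sqrt_pos.2 hv)
    (sqrt_lt_sqrt (le_of_lt hu) huv)) two_pos

theorem cosh_sqrt_mul_lt_sqrt_cosh_mul_cosh {x y : ℝ} (hx : 0 ≤ x) (hy : 0 ≤ y) (hxy : x ≠ y) :
    cosh √(x * y) < √(cosh x * cosh y) := by
  rw [lt_sqrt (cosh_pos _).le, cosh_sq_eq_cosh_two_mul, cosh_mul_cosh]
  have am_gm : 2 * √(x * y) ≤ x + y := by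
    rw [sqrt_mul hx]
    nlinarith [sq_sqrt hx, sq_sqrt hy, sq_nonneg (√x - √y)]
  have h₁ : cosh (2 * √(x * y)) ≤ cosh (x + y) := by
    rw [cosh_le_cosh, abs_of_nonneg (by positivity), abs_of_nonneg (by positivity)]
    exact am_gm
  have h₂ : 1 < cosh (x - y) := one_lt_cosh.2 (sub_ne_zero.2 hxy)
  linarith

theorem sqrt_cosh_mul_cosh_lt_cosh_sqrt {x y : ℝ} (hxy : x ^ 2 ≠ y ^ 2) :
    √(cosh x * cosh y) < cosh √((x ^ 2 + y ^ 2) / 2) := by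
  rw [sqrt_lt' (cosh_pos _), cosh_sq_eq_cosh_two_mul, cosh_mul_cosh]
  have hfac : (x + y) * (x - y) ≠ 0 := fun h ↦ hxy (by linear_combination h)
  have superadd := strictConvexOn_cosh_sqrt.map_add_map_lt_map_add_add_map_zero
    (sq_pos_of_ne_zero (left_ne_zero_of_mul hfac)) (sq_pos_of_ne_zero (right_ne_zero_of_mul hfac))
  have hsqrt : √((x + y) ^ 2 + (x - y) ^ 2) = 2 * √((x ^ 2 + y ^ 2) / 2) := by
    rw [show (x + y) ^ 2 + (x - y) ^ 2 = 2 ^ 2 * ((x ^ 2 + y ^ 2) / 2) by ring,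
      sqrt_mul (by positivity), sqrt_sq zero_le_two]
  simp only [cosh_sqrt_sq, hsqrt, sqrt_zero, cosh_zero] at superadd
  linarith

theorem cosh_sqrt_lt_cosh_add_cosh_div_two {x y : ℝ} (hxy : x ^ 2 ≠ y ^ 2) :
    cosh √((x ^ 2 + y ^ 2) / 2) < (cosh x + cosh y) / 2 := by
  have midpoint := strictConvexOn_cosh_sqrt.2 (sq_nonneg x) (sq_nonneg y) hxy one_half_pos
    one_half_pos (add_halves 1)
  simp only [smul_eq_mul, cosh_sqrt_sq] at midpoint
  rw [show (x ^ 2 + y ^ 2) / 2 = 1 / 2 * x ^ 2 + 1 / 2 * y ^ 2 by ring]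
  linarith

end Real

theorem le_and_eq_iff_of_lt_of_eq {α : Type*} [PartialOrder α] {a b : α} {p : Prop}
    (hlt : ¬p → a < b) (heq : p → a = b) : a ≤ b ∧ (a = b ↔ p) := by
  by_cases hp : p
  · exact ⟨(heq hp).le, iff_of_true (heq hp) hp⟩
  · exact ⟨(hlt hp).le, iff_of_false (hlt hp).ne hp⟩

/-- for positive `x, y`:
`cosh√(xy) ≤ √(cosh x · cosh y) ≤ cosh√((x²+y²)/2) ≤ (cosh x + cosh y)/2`,
with equality in each inequality iff `x = y`. -/
theorem stmt17 (x y : ℝ) (hx : 0 < x) (hy : 0 < y) :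
    (Real.cosh (Real.sqrt (x * y)) ≤ Real.sqrt (Real.cosh x * Real.cosh y) ∧
      (Real.cosh (Real.sqrt (x * y)) = Real.sqrt (Real.cosh x * Real.cosh y) ↔ x = y)) ∧
    (Real.sqrt (Real.cosh x * Real.cosh y) ≤ Real.cosh (Real.sqrt ((x ^ 2 + y ^ 2) / 2)) ∧
      (Real.sqrt (Real.cosh x * Real.cosh y) = Real.cosh (Real.sqrt ((x ^ 2 + y ^ 2) / 2))
        ↔ x = y)) ∧
    (Real.cosh (Real.sqrt ((x ^ 2 + y ^ 2) / 2)) ≤ (Real.cosh x + Real.cosh y) / 2 ∧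
      (Real.cosh (Real.sqrt ((x ^ 2 + y ^ 2) / 2)) = (Real.cosh x + Real.cosh y) / 2
        ↔ x = y)) := by
  have sq_ne : x ≠ y → x ^ 2 ≠ y ^ 2 := fun h ↦ by
    rwa [Ne, pow_left_inj₀ hx.le hy.le two_ne_zero]
  have sqrt_mean_self : √((x ^ 2 + x ^ 2) / 2) = x := by
    rw [add_self_div_two, sqrt_sq hx.le]
  have sqrt_cosh_mul_self : √(cosh x * cosh x) = cosh x := sqrt_mul_self (cosh_pos x).le
  refine ⟨le_and_eq_iff_of_lt_of_eq ?_ ?_, le_and_eq_iff_of_lt_of_eq ?_ ?_,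
    le_and_eq_iff_of_lt_of_eq ?_ ?_⟩
  · exact cosh_sqrt_mul_lt_sqrt_cosh_mul_cosh hx.le hy.le
  · rintro rfl; rw [sqrt_mul_self hx.le, sqrt_cosh_mul_self]
  · exact fun h ↦ sqrt_cosh_mul_cosh_lt_cosh_sqrt (sq_ne h)
  · rintro rfl; rw [sqrt_mean_self, sqrt_cosh_mul_self]
  · exact fun h ↦ cosh_sqrt_lt_cosh_add_cosh_div_two (sq_ne h)
  · rintro rfl; rw [sqrt_mean_self, add_self_div_two]
end

section
/- For all x, y ∈ (0,∞): sinh(√(xy))/√(xy) ≤ √((sinh x / x)(sinh y / y)) ≤ sinh(√((x²+y²)/2))/√((x²+y²)/2) ≤ (1/2)(sinh x / x + sinh y / y), with equality in each inequality iff x = y. -/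
open Real Set

/-!
Write `sinhc x = sinh x / x`. The three inequalities are midpoint inequalities for `sinhc` in three
coordinates: `v ↦ log (sinhc (exp v))` is strictly convex (taken at `v = log x, log y`), while
`w ↦ log (sinhc √w)` is strictly concave and `w ↦ sinhc √w` is strictly convex (taken at
`w = x², y²`). Each is proved by showing that the derivative is strictly monotone, which comes
down to inequalities between `sinh` and `cosh` such as `4 cosh x < x sinh x + x² + 4`; these follow
from a chain of functions vanishing at `0`, each the derivative of the next.
-/

lemma pos_of_hasDerivAt_of_pos {f f' : ℝ → ℝ} (hd : ∀ u, HasDerivAt f (f' u) u)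
    (hf' : ∀ u > 0, 0 < f' u) (h0 : f 0 = 0) {x : ℝ} (hx : 0 < x) : 0 < f x := by
  have hmono : StrictMonoOn f (Ici 0) :=
    strictMonoOn_of_hasDerivWithinAt_pos (convex_Ici 0)
      (fun u _ => (hd u).continuousAt.continuousWithinAt) (fun u _ => (hd u).hasDerivWithinAt)
      (by rw [interior_Ici]; exact hf')
  simpa only [h0] using hmono self_mem_Ici hx.le hx

lemma strictMonoOn_Ioi_of_hasDerivAt_pos {f f' : ℝ → ℝ}
    (hd : ∀ u > 0, HasDerivAt f (f' u) u)
    (hf' : ∀ u > 0, 0 < f' u) : StrictMonoOn f (Ioi 0) :=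
  strictMonoOn_of_hasDerivWithinAt_pos (convex_Ioi 0)
    (fun u hu => (hd u hu).continuousAt.continuousWithinAt)
    (by rw [interior_Ioi]; exact fun u hu => (hd u hu).hasDerivWithinAt)
    (by rw [interior_Ioi]; exact hf')

lemma strictAntiOn_Ioi_of_hasDerivAt_neg {f f' : ℝ → ℝ}
    (hd : ∀ u > 0, HasDerivAt f (f' u) u)
    (hf' : ∀ u > 0, f' u < 0) : StrictAntiOn f (Ioi 0) :=
  strictAntiOn_of_hasDerivWithinAt_neg (convex_Ioi 0)
    (fun u hu => (hd u hu).continuousAt.continuousWithinAt)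
    (by rw [interior_Ioi]; exact fun u hu => (hd u hu).hasDerivWithinAt)
    (by rw [interior_Ioi]; exact hf')

lemma strictConvexOn_of_hasDerivAt {s : Set ℝ} (hs : Convex ℝ s) (hso : IsOpen s)
    {f f' : ℝ → ℝ}
    (hd : ∀ x ∈ s, HasDerivAt f (f' x) x) (hf' : StrictMonoOn f' s) : StrictConvexOn ℝ s f :=
  StrictMonoOn.strictConvexOn_of_deriv hs
    (fun x hx => (hd x hx).continuousAt.continuousWithinAt)
    (by rw [hso.interior_eq]; exact hf'.congr fun x hx => (hd x hx).deriv.symm)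

namespace Real

variable {x : ℝ}

lemma sinh_lt_mul_cosh (hx : 0 < x) : sinh x < x * cosh x := by
  have := pos_of_hasDerivAt_of_pos (f := fun u => u * cosh u - sinh u) (f' := fun u => u * sinh u)
    (fun u => (((hasDerivAt_id u).mul (hasDerivAt_cosh u)).sub (hasDerivAt_sinh u)).congr_deriv
      (by simp))
    (fun u hu => mul_pos hu (sinh_pos_iff.2 hu)) (by simp) hx
  linarith

lemma two_mul_cosh_lt (hx : 0 < x) : 2 * cosh x < x * sinh x + 2 := by
  have := pos_of_hasDerivAt_of_pos (f := fun u => u * sinh u + 2 - 2 * cosh u)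
    (f' := fun u => u * cosh u - sinh u)
    (fun u => ((((hasDerivAt_id u).mul (hasDerivAt_sinh u)).add_const 2).sub
      ((hasDerivAt_cosh u).const_mul 2)).congr_deriv (by simp; ring))
    (fun u hu => by linarith [sinh_lt_mul_cosh hu]) (by simp) hx
  linarith

lemma three_mul_sinh_lt (hx : 0 < x) : 3 * sinh x < x * cosh x + 2 * x := by
  have := pos_of_hasDerivAt_of_pos (f := fun u => u * cosh u + 2 * u - 3 * sinh u)
    (f' := fun u => u * sinh u + 2 - 2 * cosh u)
    (fun u => ((((hasDerivAt_id u).mul (hasDerivAt_cosh u)).add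
      ((hasDerivAt_id u).const_mul 2)).sub ((hasDerivAt_sinh u).const_mul 3)).congr_deriv
      (by simp; ring))
    (fun u hu => by linarith [two_mul_cosh_lt hu]) (by simp) hx
  linarith

lemma four_mul_cosh_lt (hx : 0 < x) : 4 * cosh x < x * sinh x + x ^ 2 + 4 := by
  have := pos_of_hasDerivAt_of_pos (f := fun u => u * sinh u + u ^ 2 + 4 - 4 * cosh u)
    (f' := fun u => u * cosh u + 2 * u - 3 * sinh u)
    (fun u => (((((hasDerivAt_id u).mul (hasDerivAt_sinh u)).add (hasDerivAt_pow 2 u)).add_const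
      4).sub ((hasDerivAt_cosh u).const_mul 4)).congr_deriv (by simp; ring))
    (fun u hu => by linarith [three_mul_sinh_lt hu]) (by simp) hx
  linarith

lemma three_mul_mul_cosh_lt (hx : 0 < x) : 3 * x * cosh x < (x ^ 2 + 3) * sinh x := by
  have := pos_of_hasDerivAt_of_pos (f := fun u => (u ^ 2 + 3) * sinh u - 3 * u * cosh u)
    (f' := fun u => u * (u * cosh u - sinh u))
    (fun u => ((((hasDerivAt_pow 2 u).add_const 3).mul (hasDerivAt_sinh u)).sub
      (((hasDerivAt_id u).const_mul 3).mul (hasDerivAt_cosh u))).congr_deriv (by simp; ring))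
    (fun u hu => mul_pos hu (by linarith [sinh_lt_mul_cosh hu])) (by simp) hx
  linarith

lemma strictMonoOn_mul_cosh_div_sinh : StrictMonoOn (fun u => u * cosh u / sinh u) (Ioi 0) := by
  refine strictMonoOn_Ioi_of_hasDerivAt_pos (f' := fun u => (sinh u * cosh u - u) / sinh u ^ 2)
    (fun u hu => (((hasDerivAt_id u).mul (hasDerivAt_cosh u)).div (hasDerivAt_sinh u)
      (sinh_pos_iff.2 hu).ne').congr_deriv ?_)
    fun u hu => div_pos ?_ (pow_pos (sinh_pos_iff.2 hu) 2)
  · have := (sinh_pos_iff.2 hu).ne'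
    simp only [Pi.mul_apply, id]
    field_simp
    linear_combination (-u) * cosh_sq u
  · nlinarith [self_lt_sinh_iff.2 hu, one_lt_cosh.2 hu.ne']

lemma strictMonoOn_mul_cosh_sub_sinh_div_cube :
    StrictMonoOn (fun u => (u * cosh u - sinh u) / (2 * u ^ 3)) (Ioi 0) :=
  strictMonoOn_Ioi_of_hasDerivAt_pos
    (f' := fun u => ((u ^ 2 + 3) * sinh u - 3 * u * cosh u) / (2 * u ^ 4))
    (fun u hu => ((((hasDerivAt_id u).mul (hasDerivAt_cosh u)).sub (hasDerivAt_sinh u)).div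
      ((hasDerivAt_pow 3 u).const_mul 2) (by positivity)).congr_deriv
      (by simp only [Pi.mul_apply, Pi.sub_apply, id]; field_simp; ring))
    fun u hu => div_pos (by linarith [three_mul_mul_cosh_lt hu]) (by positivity)

lemma strictAntiOn_mul_cosh_sub_sinh_div_sq_mul_sinh :
    StrictAntiOn (fun u => (u * cosh u - sinh u) / (2 * u ^ 2 * sinh u)) (Ioi 0) := by
  refine strictAntiOn_Ioi_of_hasDerivAt_neg
    (f' := fun u => (2 * sinh u ^ 2 - u * sinh u * cosh u - u ^ 2) / (2 * u ^ 3 * sinh u ^ 2))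
    (fun u hu => ((((hasDerivAt_id u).mul (hasDerivAt_cosh u)).sub (hasDerivAt_sinh u)).div
      (((hasDerivAt_pow 2 u).const_mul 2).mul (hasDerivAt_sinh u))
      (by have := sinh_pos_iff.2 hu; positivity : 2 * u ^ 2 * sinh u ≠ 0)).congr_deriv ?_)
    fun u hu => div_neg_of_neg_of_pos ?_ (by have := sinh_pos_iff.2 hu; positivity)
  · have := (sinh_pos_iff.2 hu).ne'
    simp only [Pi.mul_apply, Pi.sub_apply, id, Nat.cast_ofNat, Nat.add_one_sub_one, pow_one]
    field_simp
    linear_combination (-u ^ 2) * cosh_sq u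
  · -- `four_mul_cosh_lt` at `2u` is `2 sinh² u < u sinh u cosh u + u²`.
    have h := four_mul_cosh_lt (mul_pos two_pos hu)
    rw [cosh_two_mul, sinh_two_mul, cosh_sq] at h
    nlinarith

-- `sinhc 0 = 0` is a junk value; the continuous extension would be `1`.
noncomputable def sinhc (x : ℝ) : ℝ := sinh x / x

lemma sinhc_pos (hx : 0 < x) : 0 < sinhc x := div_pos (sinh_pos_iff.2 hx) hx

lemma sinhc_sqrt_sq (hx : 0 < x) : sinhc √(x ^ 2) = sinhc x := by rw [sqrt_sq hx.le]

lemma hasDerivAt_sinhc (hx : x ≠ 0) : HasDerivAt sinhc ((x * cosh x - sinh x) / x ^ 2) x :=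
  ((hasDerivAt_sinh x).div (hasDerivAt_id x) hx).congr_deriv (by simp; ring)

lemma hasDerivAt_log_sinhc (hx : 0 < x) :
    HasDerivAt (fun u => log (sinhc u)) (cosh x / sinh x - 1 / x) x :=
  ((hasDerivAt_sinhc hx.ne').log (sinhc_pos hx).ne').congr_deriv (by
    have := (sinh_pos_iff.2 hx).ne'
    unfold sinhc
    field_simp)

end Real

lemma strictConvexOn_comp_exp {F ψ : ℝ → ℝ} (hd : ∀ u > 0, HasDerivAt F (ψ u / u) u)
    (hψ : StrictMonoOn ψ (Ioi 0)) : StrictConvexOn ℝ univ fun v => F (exp v) :=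
  strictConvexOn_of_hasDerivAt convex_univ isOpen_univ (f' := fun v => ψ (exp v))
    (fun v _ => ((hd _ (exp_pos v)).comp v (hasDerivAt_exp v)).congr_deriv (by field_simp))
    fun a _ b _ hab => hψ (exp_pos a) (exp_pos b) (exp_lt_exp.2 hab)

lemma strictConvexOn_comp_sqrt {F ψ : ℝ → ℝ} (hd : ∀ u > 0, HasDerivAt F (2 * u * ψ u) u)
    (hψ : StrictMonoOn ψ (Ioi 0)) : StrictConvexOn ℝ (Ioi 0) fun w => F √w :=
  strictConvexOn_of_hasDerivAt (convex_Ioi 0) isOpen_Ioi (f' := fun w => ψ √w)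
    (fun w hw => ((hd _ (sqrt_pos.2 hw)).comp w (hasDerivAt_sqrt (ne_of_gt hw))).congr_deriv (by
      have := (sqrt_pos.2 hw).ne'
      field_simp))
    fun a ha b _ hab => hψ (sqrt_pos.2 ha) (sqrt_pos.2 (ha.trans hab)) (sqrt_lt_sqrt ha.le hab)

lemma strictConcaveOn_comp_sqrt {F ψ : ℝ → ℝ} (hd : ∀ u > 0, HasDerivAt F (2 * u * ψ u) u)
    (hψ : StrictAntiOn ψ (Ioi 0)) : StrictConcaveOn ℝ (Ioi 0) fun w => F √w := by
  rw [← neg_strictConvexOn_iff]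
  exact strictConvexOn_comp_sqrt (F := fun u => -F u) (ψ := fun u => -ψ u)
    (fun u hu => (hd u hu).neg.congr_deriv (by ring)) hψ.neg

lemma strictConvexOn_log_sinhc_exp : StrictConvexOn ℝ univ fun v => log (sinhc (exp v)) :=
  strictConvexOn_comp_exp (ψ := fun u => u * cosh u / sinh u - 1)
    (fun u hu => (hasDerivAt_log_sinhc hu).congr_deriv (by field_simp))
    fun a ha b hb hab => sub_lt_sub_right (strictMonoOn_mul_cosh_div_sinh ha hb hab) 1

lemma strictConcaveOn_log_sinhc_sqrt : StrictConcaveOn ℝ (Ioi 0) fun w => log (sinhc √w) :=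
  strictConcaveOn_comp_sqrt (fun u hu => (hasDerivAt_log_sinhc hu).congr_deriv (by
      have := (sinh_pos_iff.2 hu).ne'
      field_simp))
    strictAntiOn_mul_cosh_sub_sinh_div_sq_mul_sinh

lemma strictConvexOn_sinhc_sqrt : StrictConvexOn ℝ (Ioi 0) fun w => sinhc √w :=
  strictConvexOn_comp_sqrt (fun u hu => (hasDerivAt_sinhc hu.ne').congr_deriv (by field_simp))
    strictMonoOn_mul_cosh_sub_sinh_div_cube

section Midpoint

variable {s : Set ℝ} {f : ℝ → ℝ} {a b : ℝ}

lemma Convex.add_div_two_mem_s18 (hs : Convex ℝ s) (ha : a ∈ s) (hb : b ∈ s) :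
    (a + b) / 2 ∈ s := by
  convert hs ha hb (by norm_num : (0:ℝ) ≤ 1 / 2) (by norm_num : (0:ℝ) ≤ 1 / 2) (by norm_num)
    using 1
  simp only [smul_eq_mul]
  ring

lemma StrictConvexOn.apply_add_div_two_le_and_eq_iff (hf : StrictConvexOn ℝ s f) (ha : a ∈ s)
    (hb : b ∈ s) :
    f ((a + b) / 2) ≤ (f a + f b) / 2 ∧ (f ((a + b) / 2) = (f a + f b) / 2 ↔ a = b) := by
  rcases eq_or_ne a b with rfl | hab
  · simp
  have hlt : f ((a + b) / 2) < (f a + f b) / 2 := by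
    have h := hf.2 ha hb hab (by norm_num : (0:ℝ) < 1 / 2) (by norm_num : (0:ℝ) < 1 / 2)
      (by norm_num)
    rw [smul_eq_mul, smul_eq_mul, smul_eq_mul, smul_eq_mul, ← mul_add, one_div_mul_eq_div] at h
    linarith
  exact ⟨hlt.le, iff_of_false hlt.ne hab⟩

lemma StrictConcaveOn.add_div_two_le_apply_and_eq_iff (hf : StrictConcaveOn ℝ s f) (ha : a ∈ s)
    (hb : b ∈ s) :
    (f a + f b) / 2 ≤ f ((a + b) / 2) ∧ ((f a + f b) / 2 = f ((a + b) / 2) ↔ a = b) := by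
  have h := hf.neg.apply_add_div_two_le_and_eq_iff ha hb
  simp only [Pi.neg_apply] at h
  refine ⟨by linarith [h.1], ?_⟩
  rw [← h.2]
  constructor <;> intro heq <;> linarith

lemma sqrt_mul_eq_exp_log_add_div_two {p q : ℝ} (hp : 0 < p) (hq : 0 < q) :
    √(p * q) = exp ((log p + log q) / 2) := by
  rw [exp_half, exp_add, exp_log hp, exp_log hq]

lemma StrictConvexOn.apply_add_div_two_le_sqrt_mul_and_eq_iff {g : ℝ → ℝ}
    (hg : StrictConvexOn ℝ s fun x => log (g x)) (hpos : ∀ x ∈ s, 0 < g x) (ha : a ∈ s)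
    (hb : b ∈ s) :
    g ((a + b) / 2) ≤ √(g a * g b) ∧ (g ((a + b) / 2) = √(g a * g b) ↔ a = b) := by
  rw [sqrt_mul_eq_exp_log_add_div_two (hpos a ha) (hpos b hb),
    ← exp_log (hpos _ (hg.1.add_div_two_mem_s18 ha hb)), exp_le_exp, exp_eq_exp]
  exact hg.apply_add_div_two_le_and_eq_iff ha hb

lemma StrictConcaveOn.sqrt_mul_le_apply_add_div_two_and_eq_iff {g : ℝ → ℝ}
    (hg : StrictConcaveOn ℝ s fun x => log (g x)) (hpos : ∀ x ∈ s, 0 < g x) (ha : a ∈ s)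
    (hb : b ∈ s) :
    √(g a * g b) ≤ g ((a + b) / 2) ∧ (√(g a * g b) = g ((a + b) / 2) ↔ a = b) := by
  rw [sqrt_mul_eq_exp_log_add_div_two (hpos a ha) (hpos b hb),
    ← exp_log (hpos _ (hg.1.add_div_two_mem_s18 ha hb)), exp_le_exp, exp_eq_exp]
  exact hg.add_div_two_le_apply_and_eq_iff ha hb

end Midpoint

variable {x y : ℝ}

lemma sinhc_sqrt_mul_le_sqrt_sinhc_mul (hx : 0 < x) (hy : 0 < y) :
    sinhc √(x * y) ≤ √(sinhc x * sinhc y) ∧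
      (sinhc √(x * y) = √(sinhc x * sinhc y) ↔ x = y) := by
  have h := strictConvexOn_log_sinhc_exp.apply_add_div_two_le_sqrt_mul_and_eq_iff
    (fun v _ => sinhc_pos (exp_pos v)) (mem_univ (log x)) (mem_univ (log y))
  simpa only [← sqrt_mul_eq_exp_log_add_div_two hx hy, exp_log hx, exp_log hy, log_injOn_pos.eq_iff hx hy] using h

lemma sqrt_sinhc_mul_le_sinhc_sqrt_add_sq_div_two (hx : 0 < x) (hy : 0 < y) :
    √(sinhc x * sinhc y) ≤ sinhc √((x ^ 2 + y ^ 2) / 2) ∧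
      (√(sinhc x * sinhc y) = sinhc √((x ^ 2 + y ^ 2) / 2) ↔ x = y) := by
  have h := strictConcaveOn_log_sinhc_sqrt.sqrt_mul_le_apply_add_div_two_and_eq_iff
    (fun w hw => sinhc_pos (sqrt_pos.2 hw)) (pow_pos hx 2) (pow_pos hy 2)
  simpa only [sinhc_sqrt_sq hx, sinhc_sqrt_sq hy, sq_eq_sq₀ hx.le hy.le] using h

lemma sinhc_sqrt_add_sq_div_two_le_add_div_two (hx : 0 < x) (hy : 0 < y) :
    sinhc √((x ^ 2 + y ^ 2) / 2) ≤ (sinhc x + sinhc y) / 2 ∧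
      (sinhc √((x ^ 2 + y ^ 2) / 2) = (sinhc x + sinhc y) / 2 ↔ x = y) := by
  have h := strictConvexOn_sinhc_sqrt.apply_add_div_two_le_and_eq_iff (pow_pos hx 2) (pow_pos hy 2)
  simpa only [sinhc_sqrt_sq hx, sinhc_sqrt_sq hy, sq_eq_sq₀ hx.le hy.le] using h

/-- for positive `x, y`:
`sinh√(xy)/√(xy) ≤ √((sinh x/x)(sinh y/y)) ≤ sinh√((x²+y²)/2)/√((x²+y²)/2)
  ≤ ((sinh x/x) + (sinh y/y))/2`, with equality in each inequality iff `x = y`. -/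
theorem stmt18 (x y : ℝ) (hx : 0 < x) (hy : 0 < y) :
    (Real.sinh (Real.sqrt (x * y)) / Real.sqrt (x * y) ≤
        Real.sqrt (Real.sinh x / x * (Real.sinh y / y)) ∧
      (Real.sinh (Real.sqrt (x * y)) / Real.sqrt (x * y) =
          Real.sqrt (Real.sinh x / x * (Real.sinh y / y)) ↔ x = y)) ∧
    (Real.sqrt (Real.sinh x / x * (Real.sinh y / y)) ≤
        Real.sinh (Real.sqrt ((x ^ 2 + y ^ 2) / 2)) / Real.sqrt ((x ^ 2 + y ^ 2) / 2) ∧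
      (Real.sqrt (Real.sinh x / x * (Real.sinh y / y)) =
          Real.sinh (Real.sqrt ((x ^ 2 + y ^ 2) / 2)) / Real.sqrt ((x ^ 2 + y ^ 2) / 2)
        ↔ x = y)) ∧
    (Real.sinh (Real.sqrt ((x ^ 2 + y ^ 2) / 2)) / Real.sqrt ((x ^ 2 + y ^ 2) / 2) ≤
        (Real.sinh x / x + Real.sinh y / y) / 2 ∧
      (Real.sinh (Real.sqrt ((x ^ 2 + y ^ 2) / 2)) / Real.sqrt ((x ^ 2 + y ^ 2) / 2) =
          (Real.sinh x / x + Real.sinh y / y) / 2 ↔ x = y)) :=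
  ⟨sinhc_sqrt_mul_le_sqrt_sinhc_mul hx hy, sqrt_sinhc_mul_le_sinhc_sqrt_add_sq_div_two hx hy,
    sinhc_sqrt_add_sq_div_two_le_add_div_two hx hy⟩
end
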